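/- For any tree H, the set Θ(H) of integers t for which H admits a cyclically-interval t-coloring equals the integer interval [Δ(H), M(H)], where Δ(H) is the maximum degree. -/

import Mathlib

open SimpleGraph

/-- `Q` is a `t`-cyclic interval. -/
def IsCyclicInterval (t : ℕ) (Q : Set ℕ) : Prop :=
  ∃ i₁ ∈ Set.Icc 1 t, ∃ i₂ ∈ Set.Icc 1 t,
    Q = Set.Icc (min i₁ i₂) (max i₁ i₂) ∨
    Q = Set.Icc 1 t \ (Set.Icc (min i₁ i₂) (max i₁ i₂) \ {i₁, i₂})

/-- A proper edge `t`-coloring: colors in `[1,t]`, adjacent edges differ, all colors used. -/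
def IsProperEdgeColoring {V : Type*} (G : SimpleGraph V) (t : ℕ) (φ : Sym2 V → ℕ) : Prop :=
  (∀ e ∈ G.edgeSet, φ e ∈ Set.Icc 1 t) ∧
  (∀ e₁ ∈ G.edgeSet, ∀ e₂ ∈ G.edgeSet, e₁ ≠ e₂ → (∃ x, x ∈ e₁ ∧ x ∈ e₂) → φ e₁ ≠ φ e₂) ∧
  (∀ c ∈ Set.Icc 1 t, ∃ e ∈ G.edgeSet, φ e = c)

/-- A cyclically-interval `t`-coloring. -/
def IsCyclicIntervalColoring {V : Type*} (G : SimpleGraph V) (t : ℕ) (φ : Sym2 V → ℕ) : Prop :=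
  IsProperEdgeColoring G t φ ∧
  ∀ x : V, (G.incidenceSet x).Nonempty → IsCyclicInterval t (φ '' G.incidenceSet x)

/-- An interval `t`-coloring. -/
def IsIntervalColoring {V : Type*} (G : SimpleGraph V) (t : ℕ) (φ : Sym2 V → ℕ) : Prop :=
  IsProperEdgeColoring G t φ ∧
  ∀ x : V, (G.incidenceSet x).Nonempty → ∃ a b, φ '' G.incidenceSet x = Set.Icc a b

/-- `TP(u,v)` along a path `p`. -/
def pathTP {V : Type*} (G : SimpleGraph V) {u v : V} (p : G.Walk u v) : Set (Sym2 V) :=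
  if p.length ≤ 1 then {e | e ∈ p.edges}
  else ⋃ x ∈ {w | w ∈ p.support ∧ w ≠ u ∧ w ≠ v}, G.incidenceSet x

/-- `M(H)`: maximum of `|TP(b_i,b_j)|` over pairs of vertices. -/
noncomputable def treeM {V : Type*} (G : SimpleGraph V) : ℕ :=
  sSup {n | ∃ (u v : V) (p : G.Walk u v), p.IsPath ∧ (pathTP G p).ncard = n}

noncomputable def Wcyc {V : Type*} (G : SimpleGraph V) : ℕ :=
  sSup {t | ∃ φ, IsCyclicIntervalColoring G t φ}

noncomputable def wcyc {V : Type*} (G : SimpleGraph V) : ℕ :=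
  sInf {t | ∃ φ, IsCyclicIntervalColoring G t φ}

noncomputable def Wint {V : Type*} (G : SimpleGraph V) : ℕ :=
  sSup {t | ∃ φ, IsIntervalColoring G t φ}

noncomputable def wint {V : Type*} (G : SimpleGraph V) : ℕ :=
  sInf {t | ∃ φ, IsIntervalColoring G t φ}

/-- Chromatic index: least `n` admitting a proper edge coloring with colors in `[1,n]`. -/
noncomputable def chromIndex {V : Type*} (G : SimpleGraph V) : ℕ :=
  sInf {n | ∃ φ : Sym2 V → ℕ, (∀ e ∈ G.edgeSet, φ e ∈ Set.Icc 1 n) ∧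
    (∀ e₁ ∈ G.edgeSet, ∀ e₂ ∈ G.edgeSet, e₁ ≠ e₂ → (∃ x, x ∈ e₁ ∧ x ∈ e₂) → φ e₁ ≠ φ e₂)}

/-!
A cyclically-interval `t`-colouring of a tree `H` uses at least `Δ(H)` colours since it is proper.
For the upper bound, the colours seen from the vertices of a path form an arc of the cycle
`1, …, t`, because the arcs at consecutive vertices share the colour of the edge between them.
If this arc misses a colour, the edge carrying it can be joined to the path at a vertex `m`; the
three arcs of the two halves of the path and of the connecting path all pass through a colour at
`m`, and this forces the connecting path together with one of the halves to cover strictly more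
colours. So some path sees every colour; extended until both ends are leaves, all the edges it
sees lie in `TP`, whence `t ≤ M(H)`.

Conversely, root `H` at the first vertex `u` of a path `P` with `|TP(P)| = M(H)`, number the
children of each vertex `1, 2, …` (the child on `P` last), and give the edge from a vertex to its
child the sum of these numbers along the path from `u` to the child. This is an interval colouring
in which every vertex sees `deg` consecutive colours and which uses at least
`∑_{x ∈ P} deg x - length P ≥ |TP(P)| ≥ t` colours. Reducing its colours modulo `t` turns each block of
at most `Δ(H) ≤ t` consecutive colours into a cyclic interval.
-/

open scoped Finset

/-! ### Ranking a finset by a key -/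

namespace Finset

variable {α : Type*} (s : Finset α) (key : α → ℕ)

def rankBy (c : α) : ℕ := #{d ∈ s | key d < key c}

variable {s key}

lemma rankBy_lt_card {c : α} (hc : c ∈ s) : s.rankBy key c < #s :=
  card_lt_card ⟨filter_subset _ _, fun h => lt_irrefl (key c) (mem_filter.1 (h hc)).2⟩

lemma rankBy_lt_rankBy {c d : α} (hc : c ∈ s) (h : key c < key d) :
    s.rankBy key c < s.rankBy key d := by
  refine card_lt_card ((ssubset_iff_of_subset fun x hx => ?_).2 ⟨c, ?_, ?_⟩)
  · rw [mem_filter] at hx ⊢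
    exact ⟨hx.1, hx.2.trans h⟩
  · exact mem_filter.2 ⟨hc, h⟩
  · exact fun hc' => lt_irrefl _ (mem_filter.1 hc').2

lemma rankBy_injOn (hkey : Set.InjOn key s) : Set.InjOn (s.rankBy key) s := by
  intro c hc d hd h
  rcases lt_trichotomy (key c) (key d) with hlt | heq | hlt
  · exact absurd h (rankBy_lt_rankBy hc hlt).ne
  · exact hkey hc hd heq
  · exact absurd h (rankBy_lt_rankBy hd hlt).ne'

lemma image_rankBy (hkey : Set.InjOn key s) : s.image (s.rankBy key) = range #s := by
  refine eq_of_subset_of_card_le (fun m hm => ?_) ?_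
  · obtain ⟨c, hc, rfl⟩ := mem_image.1 hm
    exact mem_range.2 (rankBy_lt_card hc)
  · rw [card_range, card_image_of_injOn (rankBy_injOn hkey)]

lemma rankBy_eq_card_sub_one {c : α} (hc : c ∈ s) (h : ∀ d ∈ s, d ≠ c → key d < key c) :
    s.rankBy key c = #s - 1 := by
  classical
  have : {d ∈ s | key d < key c} = s.erase c := by
    ext d
    simp only [mem_filter, mem_erase]
    exact ⟨fun hd => ⟨fun hdc => (hdc ▸ hd.2).false, hd.1⟩, fun hd => ⟨hd.2, h d hd.2 hd.1⟩⟩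
  rw [rankBy, this, card_erase_of_mem hc]

end Finset

/-! ### Arcs of the cycle `1, …, t` -/

/-- The number of steps from `x` forward to `y` along the cycle `1 → 2 → ⋯ → t → 1`, for
`x, y ∈ [1, t]`. -/
def cycDist (t x y : ℕ) : ℕ := if x ≤ y then y - x else y + t - x

/-- The arc from `α` steps before `p` to `β` steps after `p`; it is all of `[1, t]` as soon as
`α + β + 1 ≥ t`. Describing arcs from a point on them turns unions into maxima. -/
def cycArc (t p α β : ℕ) : Set ℕ := {c ∈ Set.Icc 1 t | cycDist t p c ≤ β ∨ cycDist t c p ≤ α}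

def IsCycArc (t : ℕ) (S : Set ℕ) : Prop := ∃ p ∈ Set.Icc 1 t, ∃ α β, S = cycArc t p α β

lemma cycArc_subset_Icc (t p α β : ℕ) : cycArc t p α β ⊆ Set.Icc 1 t := fun _ hc => hc.1

lemma cycArc_union (t p α β α' β' : ℕ) :
    cycArc t p α β ∪ cycArc t p α' β' = cycArc t p (max α α') (max β β') := by
  ext c
  simp only [cycArc, Set.mem_union, Set.mem_ofPred_eq, Set.mem_Icc]
  omega

lemma exists_cycArc_eq_of_mem {t p q α β : ℕ} (hp : p ∈ Set.Icc 1 t)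
    (hq : q ∈ cycArc t p α β) : ∃ α' β', cycArc t p α β = cycArc t q α' β' := by
  obtain ⟨⟨hq1, hqt⟩, hpq | hqp⟩ := hq
  · refine ⟨α + cycDist t p q, β - cycDist t p q, Set.ext fun c => ?_⟩
    simp only [cycArc, Set.mem_ofPred_eq, Set.mem_Icc] at hp ⊢
    unfold cycDist at hpq ⊢
    split_ifs at hpq ⊢ <;> omega
  · refine ⟨α - cycDist t q p, β + cycDist t q p, Set.ext fun c => ?_⟩
    simp only [cycArc, Set.mem_ofPred_eq, Set.mem_Icc] at hp ⊢
    unfold cycDist at hqp ⊢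
    split_ifs at hqp ⊢ <;> omega

namespace IsCycArc

variable {t : ℕ} {S T : Set ℕ}

lemma subset_Icc (h : IsCycArc t S) : S ⊆ Set.Icc 1 t := by
  obtain ⟨p, -, α, β, rfl⟩ := h
  exact cycArc_subset_Icc t p α β

lemma finite (h : IsCycArc t S) : S.Finite := (Set.finite_Icc 1 t).subset h.subset_Icc

lemma exists_eq_cycArc (h : IsCycArc t S) {q : ℕ} (hq : q ∈ S) : ∃ α β, S = cycArc t q α β := by
  obtain ⟨p, hp, α, β, rfl⟩ := h
  exact exists_cycArc_eq_of_mem hp hq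

lemma union (hS : IsCycArc t S) (hT : IsCycArc t T) {q : ℕ} (hqS : q ∈ S) (hqT : q ∈ T) :
    IsCycArc t (S ∪ T) := by
  obtain ⟨α, β, rfl⟩ := hS.exists_eq_cycArc hqS
  obtain ⟨α', β', rfl⟩ := hT.exists_eq_cycArc hqT
  exact ⟨q, hS.subset_Icc hqS, _, _, cycArc_union t q α β α' β'⟩

/-- Seen from the common point `p`, the arc `Z` runs past one side of `X ∪ Y` to reach `c`, so it
covers that side of whichever of `X`, `Y` extends less far on the other side. -/
lemma union_ssubset_or {X Y Z : Set ℕ} (hX : IsCycArc t X) (hY : IsCycArc t Y)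
    (hZ : IsCycArc t Z) {p c : ℕ} (hpX : p ∈ X) (hpY : p ∈ Y) (hpZ : p ∈ Z) (hcZ : c ∈ Z)
    (hcX : c ∉ X) (hcY : c ∉ Y) : X ∪ Y ⊂ Z ∪ X ∨ X ∪ Y ⊂ Z ∪ Y := by
  have hc : c ∉ X ∪ Y := fun h => h.elim hcX hcY
  suffices Y ⊆ Z ∪ X ∨ X ⊆ Z ∪ Y by
    refine this.imp (fun h => ?_) (fun h => ?_) <;>
      refine (Set.ssubset_iff_of_subset ?_).2 ⟨c, .inl hcZ, hc⟩
    · exact Set.union_subset Set.subset_union_right h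
    · exact Set.union_subset h Set.subset_union_right
  obtain ⟨αX, βX, rfl⟩ := hX.exists_eq_cycArc hpX
  obtain ⟨αY, βY, rfl⟩ := hY.exists_eq_cycArc hpY
  obtain ⟨αZ, βZ, rfl⟩ := hZ.exists_eq_cycArc hpZ
  simp only [cycArc, Set.mem_ofPred_eq, Set.subset_def, Set.mem_union, Set.mem_Icc]
    at hcZ hcX hcY ⊢
  rcases le_total αX αY with hα | hα <;> rcases le_total βX βY with hβ | hβ <;>
    rcases hcZ.2 with hc | hc <;>
    first | (left; intro d hd; omega) | (right; intro d hd; omega)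

end IsCycArc

lemma IsCyclicInterval.isCycArc {t : ℕ} {Q : Set ℕ} (h : IsCyclicInterval t Q) :
    IsCycArc t Q := by
  obtain ⟨i, hi, j, hj, rfl | rfl⟩ := h <;> rw [Set.mem_Icc] at hi hj
  · refine ⟨min i j, ⟨by omega, by omega⟩, 0, max i j - min i j, Set.ext fun c => ?_⟩
    simp only [cycArc, cycDist, Set.mem_Icc, Set.mem_ofPred_eq]
    split_ifs <;> omega
  · refine ⟨max i j, ⟨by omega, by omega⟩, 0, t - max i j + min i j, Set.ext fun c => ?_⟩
    simp only [cycArc, cycDist, Set.mem_Icc, Set.mem_sdiff, Set.mem_insert_iff,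
      Set.mem_singleton_iff, Set.mem_ofPred_eq]
    split_ifs <;> omega

lemma isCyclicInterval_cycArc_zero {t p β : ℕ} (hp : p ∈ Set.Icc 1 t) (hβ : β < t) :
    IsCyclicInterval t (cycArc t p 0 β) := by
  rw [Set.mem_Icc] at hp
  rcases le_or_gt (p + β) t with hwrap | hwrap
  · refine ⟨p, ⟨by omega, by omega⟩, p + β, ⟨by omega, by omega⟩, Or.inl (Set.ext fun c => ?_)⟩
    simp only [cycArc, cycDist, Set.mem_Icc, Set.mem_ofPred_eq]
    split_ifs <;> omega
  · refine ⟨p + β - t, ⟨by omega, by omega⟩, p, ⟨by omega, by omega⟩,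
      Or.inr (Set.ext fun c => ?_)⟩
    simp only [cycArc, cycDist, Set.mem_Icc, Set.mem_sdiff, Set.mem_insert_iff,
      Set.mem_singleton_iff, Set.mem_ofPred_eq]
    split_ifs <;> omega

def cycReduce (t c : ℕ) : ℕ := (c - 1) % t + 1

lemma cycReduce_mem_Icc {t : ℕ} (ht : 0 < t) (c : ℕ) : cycReduce t c ∈ Set.Icc 1 t :=
  ⟨by unfold cycReduce; omega, Nat.mod_lt _ ht⟩

lemma cycReduce_of_mem_Icc {t c : ℕ} (hc : c ∈ Set.Icc 1 t) : cycReduce t c = c := by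
  obtain ⟨h1, h2⟩ := hc
  unfold cycReduce
  rw [Nat.mod_eq_of_lt (by omega)]
  omega

lemma cycReduce_add {t a j : ℕ} (ht : 0 < t) (ha : 1 ≤ a) (hj : j < t) :
    cycReduce t (a + j) =
      if cycReduce t a + j ≤ t then cycReduce t a + j else cycReduce t a + j - t := by
  have hlt := Nat.mod_lt (a - 1) ht
  have hmod : (a + j - 1) % t = ((a - 1) % t + j) % t := by
    conv_lhs => rw [show a + j - 1 = (a - 1) + j by omega, Nat.add_mod, Nat.mod_eq_of_lt hj]
  unfold cycReduce
  rw [hmod]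
  split_ifs with h
  · rw [Nat.mod_eq_of_lt (by omega)]
    omega
  · rw [Nat.mod_eq_sub_mod (by omega), Nat.mod_eq_of_lt (by omega)]
    omega

lemma cycReduce_injOn {t a b : ℕ} (ht : 0 < t) (ha : 1 ≤ a) (hab : b - a < t) :
    Set.InjOn (cycReduce t) (Set.Icc a b) := by
  rintro x ⟨hx1, hx2⟩ y ⟨hy1, hy2⟩ hxy
  have hx := cycReduce_add ht ha (show x - a < t by omega)
  have hy := cycReduce_add ht ha (show y - a < t by omega)
  rw [Nat.add_sub_cancel' hx1] at hx
  rw [Nat.add_sub_cancel' hy1] at hy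
  rw [hx, hy] at hxy
  split_ifs at hxy <;> omega

lemma cycReduce_image_Icc {t a b : ℕ} (ht : 0 < t) (ha : 1 ≤ a) (hab : b - a < t)
    (hle : a ≤ b) : cycReduce t '' Set.Icc a b = cycArc t (cycReduce t a) 0 (b - a) := by
  have hra := cycReduce_mem_Icc ht a
  rw [Set.mem_Icc] at hra
  ext c
  constructor
  · rintro ⟨x, ⟨hx1, hx2⟩, rfl⟩
    have hx := cycReduce_add ht ha (show x - a < t by omega)
    rw [Nat.add_sub_cancel' hx1] at hx
    refine ⟨cycReduce_mem_Icc ht x, ?_⟩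
    rw [hx]
    unfold cycDist
    split_ifs <;> omega
  · rintro ⟨⟨hc1, hct⟩, hc⟩
    have hd : cycDist t (cycReduce t a) c ≤ b - a := by
      unfold cycDist at hc ⊢
      split_ifs at hc ⊢ <;> omega
    refine ⟨a + cycDist t (cycReduce t a) c, ⟨by omega, by omega⟩, ?_⟩
    rw [cycReduce_add ht ha (by omega)]
    unfold cycDist
    split_ifs <;> omega

namespace SimpleGraph

variable {V : Type*} {G : SimpleGraph V}

/-! ### Edges seen from a walk -/

lemma exists_adj_of_mem_incidenceSet {x : V} {e : Sym2 V} (he : e ∈ G.incidenceSet x) :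
    ∃ y, G.Adj x y ∧ e = s(x, y) := by
  induction e with
  | _ a b =>
    obtain ⟨hab, hx⟩ := he
    rcases Sym2.mem_iff.1 hx with rfl | rfl
    · exact ⟨b, hab, rfl⟩
    · exact ⟨a, hab.symm, Sym2.eq_swap⟩

lemma incidenceSet_eq_singleton_of_degree_le_one {x y : V} [Fintype (G.neighborSet x)]
    (hx : G.degree x ≤ 1) (hxy : G.Adj x y) : G.incidenceSet x = {s(x, y)} := by
  refine Set.eq_singleton_iff_unique_mem.2 ⟨⟨hxy, Sym2.mem_mk_left x y⟩, fun e he => ?_⟩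
  obtain ⟨z, hxz, rfl⟩ := exists_adj_of_mem_incidenceSet he
  have : z = y := Finset.card_le_one.1 (by rwa [card_neighborFinset_eq_degree]) z
    ((mem_neighborFinset G x z).2 hxz) y ((mem_neighborFinset G x y).2 hxy)
  rw [this]

lemma ncard_incidenceSet (x : V) [Fintype (G.neighborSet x)] :
    (G.incidenceSet x).ncard = G.degree x := by
  classical
  rw [← coe_incidenceFinset, Set.ncard_coe_finset, card_incidenceFinset_eq_degree]

lemma Connected.incidenceSet_nonempty (hG : G.Connected) (hE : G.edgeSet.Nonempty) (x : V) :
    (G.incidenceSet x).Nonempty := by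
  obtain ⟨e, he⟩ := hE
  induction e using Sym2.ind with
  | h a b =>
    have : Nontrivial V := nontrivial_of_ne a b (G.mem_edgeSet.1 he).ne
    obtain ⟨y, hy⟩ := hG.preconnected.exists_adj_of_nontrivial x
    exact ⟨s(x, y), hy, Sym2.mem_mk_left x y⟩

namespace Walk

variable {u v w : V}

def incidentEdges (p : G.Walk u v) : Set (Sym2 V) := ⋃ x ∈ p.support, G.incidenceSet x

lemma mem_incidentEdges {p : G.Walk u v} {e : Sym2 V} :
    e ∈ p.incidentEdges ↔ ∃ x ∈ p.support, e ∈ G.incidenceSet x := by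
  simp [incidentEdges]

lemma incidenceSet_subset_incidentEdges {p : G.Walk u v} {x : V} (hx : x ∈ p.support) :
    G.incidenceSet x ⊆ p.incidentEdges := fun _ he => mem_incidentEdges.2 ⟨x, hx, he⟩

lemma incidentEdges_mono {u' v' : V} {p : G.Walk u v} {q : G.Walk u' v'}
    (h : p.support ⊆ q.support) : p.incidentEdges ⊆ q.incidentEdges := by
  intro e he
  obtain ⟨x, hx, hex⟩ := mem_incidentEdges.1 he
  exact incidenceSet_subset_incidentEdges (h hx) hex

@[simp]
lemma incidentEdges_nil : (nil : G.Walk u u).incidentEdges = G.incidenceSet u := by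
  simp [incidentEdges]

@[simp]
lemma incidentEdges_cons (h : G.Adj u v) (p : G.Walk v w) :
    (cons h p).incidentEdges = G.incidenceSet u ∪ p.incidentEdges := by
  simp [incidentEdges]

@[simp]
lemma incidentEdges_append (p : G.Walk u v) (q : G.Walk v w) :
    (p.append q).incidentEdges = p.incidentEdges ∪ q.incidentEdges := by
  ext e
  simp only [mem_incidentEdges, mem_support_append_iff, or_and_right, exists_or, Set.mem_union]

@[simp]
lemma incidentEdges_reverse (p : G.Walk u v) : p.reverse.incidentEdges = p.incidentEdges := by
  simp [incidentEdges]

lemma ncard_incidentEdges_add_length_le [Fintype V] [DecidableRel G.Adj] :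
    ∀ {u v : V} (p : G.Walk u v),
      p.incidentEdges.ncard + p.length ≤ ∑ j ∈ Finset.range (p.length + 1), G.degree (p.getVert j)
  | _, _, .nil => by
    simp only [incidentEdges_nil, ncard_incidenceSet, length_nil, zero_add, Finset.sum_range_one]
    rfl
  | a, _, .cons (v := b) h q => by
    have ih := q.ncard_incidentEdges_add_length_le
    have hunion := Set.ncard_union_add_ncard_inter (G.incidenceSet a) q.incidentEdges
      (Set.toFinite _) (Set.toFinite _)
    have hinter : 0 < (G.incidenceSet a ∩ q.incidentEdges).ncard :=
      (Set.ncard_pos (Set.toFinite _)).2 ⟨s(a, b), ⟨h, Sym2.mem_mk_left a b⟩,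
        incidenceSet_subset_incidentEdges q.start_mem_support ⟨h, Sym2.mem_mk_right a b⟩⟩
    have hsum : ∑ j ∈ Finset.range (q.length + 1), G.degree ((cons h q).getVert (j + 1)) =
        ∑ j ∈ Finset.range (q.length + 1), G.degree (q.getVert j) := rfl
    rw [incidentEdges_cons, length_cons, Finset.sum_range_succ', hsum, getVert_zero]
    rw [ncard_incidenceSet] at hunion
    omega

lemma IsPath.append_of_support_inter {p : G.Walk u v} {q : G.Walk v w} (hp : p.IsPath)
    (hq : q.IsPath) (hpq : ∀ x ∈ p.support, x ∈ q.support → x = v) : (p.append q).IsPath := by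
  rw [isPath_def, support_append, List.nodup_append]
  have hqd := hq.support_nodup
  rw [← q.cons_tail_support] at hqd
  refine ⟨hp.support_nodup, hqd.of_cons, fun x hx y hy hxy => ?_⟩
  subst hxy
  obtain rfl := hpq x hx (List.mem_of_mem_tail hy)
  exact (List.nodup_cons.1 hqd).1 hy

lemma exists_append_eq_of_mem (q : G.Walk u v) {S : Set V} (hv : v ∈ S) :
    ∃ m ∈ S, ∃ (q₁ : G.Walk u m) (q₂ : G.Walk m v), q = q₁.append q₂ ∧
      ∀ x ∈ q₁.support, x ∈ S → x = m := by
  induction q with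
  | nil => exact ⟨_, hv, nil, nil, rfl, fun x hx _ => by simpa using hx⟩
  | @cons a b c h q ih =>
    by_cases ha : a ∈ S
    · exact ⟨a, ha, nil, cons h q, rfl, fun x hx _ => by simpa using hx⟩
    obtain ⟨m, hm, q₁, q₂, rfl, hq₁⟩ := ih hv
    refine ⟨m, hm, cons h q₁, q₂, rfl, fun x hx hxS => ?_⟩
    rcases List.mem_cons.1 (support_cons h q₁ ▸ hx) with rfl | hx
    · exact absurd hxS ha
    · exact hq₁ x hx hxS

end Walk

lemma Connected.exists_isPath_to_support (hG : G.Connected) {a b : V} (p : G.Walk a b) (y : V) :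
    ∃ m ∈ p.support, ∃ q : G.Walk y m, q.IsPath ∧ ∀ x ∈ q.support, x ∈ p.support → x = m := by
  classical
  obtain ⟨r⟩ := hG.preconnected y a
  obtain ⟨m, hm, q, q', hrq, hq⟩ :=
    r.bypass.exists_append_eq_of_mem (S := {x | x ∈ p.support}) p.start_mem_support
  exact ⟨m, hm, q, (hrq ▸ r.bypass_isPath).of_append_left, hq⟩

/-! ### `TP` and `M` -/

lemma pathTP_reverse {a b : V} (p : G.Walk a b) : pathTP G p.reverse = pathTP G p := by
  unfold pathTP
  simp only [Walk.length_reverse, Walk.edges_reverse, List.mem_reverse, Walk.support_reverse]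
  congr! 5
  exact Set.ext fun _ => and_congr_right' and_comm

lemma pathTP_subset_incidentEdges {a b : V} (p : G.Walk a b) : pathTP G p ⊆ p.incidentEdges := by
  unfold pathTP
  split_ifs
  · intro e he
    obtain ⟨d, hd, rfl⟩ := List.mem_map.1 he
    exact Walk.incidenceSet_subset_incidentEdges (p.dart_fst_mem_support_of_mem_darts hd)
      ⟨d.edge_mem, Sym2.mem_mk_left _ _⟩
  · exact Set.iUnion₂_subset fun x hx => Walk.incidenceSet_subset_incidentEdges hx.1

section Finite

variable [Fintype V] [DecidableRel G.Adj]

lemma IsAcyclic.exists_adj_notMem_support (hG : G.IsAcyclic) {a b : V} {p : G.Walk a b}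
    (hp : p.IsPath) (ha : 1 < G.degree a) : ∃ w, G.Adj a w ∧ w ∉ p.support := by
  obtain ⟨w₁, hw₁, w₂, hw₂, hne⟩ :=
    Finset.one_lt_card.1 (by rwa [card_neighborFinset_eq_degree] : 1 < #(G.neighborFinset a))
  rw [mem_neighborFinset] at hw₁ hw₂
  by_contra! h
  exact hne ((hG.eq_snd_of_adj_start hp hw₁ (h w₁ hw₁)).trans
    (hG.eq_snd_of_adj_start hp hw₂ (h w₂ hw₂)).symm)

lemma IsAcyclic.exists_isPath_extend_start (hG : G.IsAcyclic) {a b : V} {p : G.Walk a b}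
    (hp : p.IsPath) : ∃ (a' : V) (q : G.Walk a' b), q.IsPath ∧ p.support ⊆ q.support ∧
      p.length ≤ q.length ∧ G.degree a' ≤ 1 := by
  induction hn : Fintype.card V - p.length using Nat.strong_induction_on generalizing a with
  | _ n ih =>
  by_cases ha : G.degree a ≤ 1
  · exact ⟨a, p, hp, List.Subset.refl _, le_rfl, ha⟩
  obtain ⟨w, hw, hwp⟩ := hG.exists_adj_notMem_support hp (by omega)
  have hp' : (Walk.cons hw.symm p).IsPath := hp.cons hwp
  have hlt := hp'.length_lt
  rw [Walk.length_cons] at hlt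
  obtain ⟨a', q, hq, hsub, hlen, hdeg⟩ := ih _ (by rw [Walk.length_cons]; omega) hp' rfl
  refine ⟨a', q, hq, fun x hx => hsub (List.mem_cons_of_mem _ hx), ?_, hdeg⟩
  rw [Walk.length_cons] at hlen
  omega

lemma IsAcyclic.exists_isPath_extend (hG : G.IsAcyclic) {a b : V} {p : G.Walk a b}
    (hp : p.IsPath) : ∃ (a' b' : V) (q : G.Walk a' b'), q.IsPath ∧ p.support ⊆ q.support ∧
      p.length ≤ q.length ∧ G.degree a' ≤ 1 ∧ G.degree b' ≤ 1 := by
  obtain ⟨a', q, hq, hpq, hlen, ha'⟩ := hG.exists_isPath_extend_start hp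
  obtain ⟨b', r, hr, hqr, hlen', hb'⟩ := hG.exists_isPath_extend_start hq.reverse
  refine ⟨a', b', r.reverse, hr.reverse, fun x hx => ?_, ?_, ha', hb'⟩
  · simpa using hqr (by simpa using hpq hx)
  · simp only [Walk.length_reverse] at hlen' ⊢
    omega

lemma incidenceSet_start_subset_pathTP {a b : V} {p : G.Walk a b} (hp : p.IsPath)
    (hlen : 2 ≤ p.length) (ha : G.degree a ≤ 1) : G.incidenceSet a ⊆ pathTP G p := by
  have hnil : ¬p.Nil := by rw [Walk.not_nil_iff_lt_length]; omega
  have hsnd : ∀ i ≤ p.length, p.getVert i = p.snd → i = 1 := fun i hi h =>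
    hp.getVert_injOn (by simpa using hi) (by simp; omega) h
  rw [incidenceSet_eq_singleton_of_degree_le_one ha (p.adj_snd hnil), Set.singleton_subset_iff,
    pathTP, if_neg (by omega)]
  refine Set.mem_biUnion (x := p.snd) ⟨p.getVert_mem_support 1, fun h => ?_, fun h => ?_⟩
    ⟨p.adj_snd hnil, Sym2.mem_mk_right _ _⟩
  · have := hsnd 0 (by omega) (by rw [p.getVert_zero, h])
    omega
  · have := hsnd p.length le_rfl (by rw [p.getVert_length, h])
    omega

lemma incidentEdges_subset_pathTP {a b : V} {p : G.Walk a b} (hp : p.IsPath)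
    (hlen : 1 ≤ p.length) (ha : G.degree a ≤ 1) (hb : G.degree b ≤ 1) :
    p.incidentEdges ⊆ pathTP G p := by
  intro e he
  obtain ⟨x, hx, hex⟩ := Walk.mem_incidentEdges.1 he
  rcases hlen.eq_or_lt with hlen | hlen
  · cases p with
    | nil => simp at hlen
    | cons h q =>
      cases q with
      | cons _ _ => simp at hlen
      | nil =>
        rw [pathTP, if_pos (by simp)]
        simp only [Walk.support_cons, Walk.support_nil, List.mem_cons, List.not_mem_nil,
          or_false] at hx
        rcases hx with rfl | rfl
        · rw [incidenceSet_eq_singleton_of_degree_le_one ha h] at hex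
          simpa using hex
        · rw [incidenceSet_eq_singleton_of_degree_le_one hb h.symm] at hex
          simpa [Sym2.eq_swap] using hex
  · by_cases hxa : x = a
    · subst hxa
      exact incidenceSet_start_subset_pathTP hp hlen ha hex
    by_cases hxb : x = b
    · subst hxb
      rw [← pathTP_reverse]
      exact incidenceSet_start_subset_pathTP hp.reverse (by simp; omega) hb hex
    rw [pathTP, if_neg (by omega)]
    exact Set.mem_biUnion ⟨hx, hxa, hxb⟩ hex

end Finite

section TreeM

variable [Finite V]

lemma treeM_bddAbove :
    BddAbove {n | ∃ (u v : V) (p : G.Walk u v), p.IsPath ∧ (pathTP G p).ncard = n} := by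
  refine ⟨Nat.card (Sym2 V), ?_⟩
  rintro _ ⟨u, v, p, -, rfl⟩
  exact Set.ncard_le_card _

lemma ncard_pathTP_le_treeM {u v : V} {p : G.Walk u v} (hp : p.IsPath) :
    (pathTP G p).ncard ≤ treeM G :=
  le_csSup treeM_bddAbove ⟨u, v, p, hp, rfl⟩

lemma exists_isPath_ncard_pathTP_eq_treeM [Nonempty V] :
    ∃ (u v : V) (p : G.Walk u v), p.IsPath ∧ (pathTP G p).ncard = treeM G := by
  obtain ⟨x⟩ := ‹Nonempty V›
  exact Nat.sSup_mem (s := {n | ∃ (u v : V) (p : G.Walk u v), p.IsPath ∧ (pathTP G p).ncard = n})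
    ⟨_, x, x, .nil, .nil, rfl⟩ treeM_bddAbove

end TreeM

/-! ### Bounds for a cyclically-interval colouring -/

section Coloring

variable {t : ℕ} {φ : Sym2 V → ℕ}

lemma IsProperEdgeColoring.injOn_incidenceSet (hφ : IsProperEdgeColoring G t φ) (x : V) :
    Set.InjOn φ (G.incidenceSet x) := fun _ he₁ _ he₂ h => by_contra fun hne =>
  hφ.2.1 _ he₁.1 _ he₂.1 hne ⟨x, he₁.2, he₂.2⟩ h

lemma IsProperEdgeColoring.ncard_image_incidenceSet (hφ : IsProperEdgeColoring G t φ) (x : V)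
    [Fintype (G.neighborSet x)] : (φ '' G.incidenceSet x).ncard = G.degree x := by
  rw [(hφ.injOn_incidenceSet x).ncard_image, ncard_incidenceSet]

lemma IsProperEdgeColoring.image_incidentEdges_subset (hφ : IsProperEdgeColoring G t φ)
    {u v : V} (p : G.Walk u v) : φ '' p.incidentEdges ⊆ Set.Icc 1 t := by
  rintro _ ⟨e, he, rfl⟩
  obtain ⟨x, -, hex⟩ := Walk.mem_incidentEdges.1 he
  exact hφ.1 e hex.1

lemma IsProperEdgeColoring.maxDegree_le [Fintype V] [DecidableRel G.Adj]
    (hφ : IsProperEdgeColoring G t φ) : G.maxDegree ≤ t := by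
  refine maxDegree_le_of_forall_degree_le _ _ fun x => ?_
  rw [← hφ.ncard_image_incidenceSet x]
  refine (Set.ncard_le_ncard ?_ (Set.finite_Icc 1 t)).trans (by simp)
  rintro _ ⟨e, he, rfl⟩
  exact hφ.1 e he.1

namespace IsCyclicIntervalColoring

variable (hφ : IsCyclicIntervalColoring G t φ)
include hφ

lemma isCycArc_image_incidentEdges (hne : ∀ x, (G.incidenceSet x).Nonempty) {u v : V}
    (p : G.Walk u v) : IsCycArc t (φ '' p.incidentEdges) := by
  induction p with
  | nil => simpa using (hφ.2 _ (hne _)).isCycArc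
  | @cons a b c h q ih =>
    rw [Walk.incidentEdges_cons, Set.image_union]
    refine IsCycArc.union (hφ.2 _ (hne a)).isCycArc ih (q := φ s(a, b))
      ⟨_, ⟨h, Sym2.mem_mk_left a b⟩, rfl⟩ ⟨_, ?_, rfl⟩
    exact Walk.incidenceSet_subset_incidentEdges q.start_mem_support ⟨h, Sym2.mem_mk_right a b⟩

lemma exists_ncard_lt (hG : G.Connected) (hne : ∀ x, (G.incidenceSet x).Nonempty) {a b : V}
    {p : G.Walk a b} (hp : p.IsPath) (hfull : φ '' p.incidentEdges ≠ Set.Icc 1 t) :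
    ∃ (a' b' : V) (p' : G.Walk a' b'), p'.IsPath ∧
      (φ '' p.incidentEdges).ncard < (φ '' p'.incidentEdges).ncard := by
  classical
  obtain ⟨c, hc, hcp⟩ : ∃ c ∈ Set.Icc 1 t, c ∉ φ '' p.incidentEdges := by
    by_contra! h
    exact hfull ((hφ.1.image_incidentEdges_subset p).antisymm h)
  obtain ⟨e, he, rfl⟩ := hφ.1.2.2 c hc
  obtain ⟨y, hy⟩ : ∃ y, y ∈ e := ⟨_, e.out_fst_mem⟩
  obtain ⟨m, hm, q, hq, hqp⟩ := hG.exists_isPath_to_support p y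
  have harc := fun {a b : V} (r : G.Walk a b) => hφ.isCycArc_image_incidentEdges hne r
  have hsplit : φ '' p.incidentEdges =
      φ '' (p.takeUntil m hm).incidentEdges ∪ φ '' (p.dropUntil m hm).incidentEdges := by
    rw [← Set.image_union, ← Walk.incidentEdges_append, p.take_spec hm]
  obtain ⟨c₀, hc₀⟩ := (hne m).image φ
  have hc₀_mem {a b : V} {r : G.Walk a b} (hr : m ∈ r.support) : c₀ ∈ φ '' r.incidentEdges :=
    Set.image_mono (Walk.incidenceSet_subset_incidentEdges hr) hc₀
  rcases IsCycArc.union_ssubset_or (harc _) (harc _) (harc q)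
      (hc₀_mem (Walk.end_mem_support _)) (hc₀_mem (Walk.start_mem_support _))
      (hc₀_mem (Walk.end_mem_support _))
      ⟨e, Walk.incidenceSet_subset_incidentEdges q.start_mem_support ⟨he, hy⟩, rfl⟩
      (fun h => hcp (hsplit ▸ Or.inl h)) (fun h => hcp (hsplit ▸ Or.inr h)) with h | h
  · refine ⟨y, a, q.append (p.takeUntil m hm).reverse, ?_, ?_⟩
    · refine hq.append_of_support_inter (hp.takeUntil hm).reverse fun x hx hx' => hqp x hx ?_
      exact p.support_takeUntil_subset_support hm (by simpa using hx')
    · rw [hsplit, Walk.incidentEdges_append, Walk.incidentEdges_reverse, Set.image_union]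
      exact Set.ncard_lt_ncard h ((harc _).finite.union (harc _).finite)
  · refine ⟨y, b, q.append (p.dropUntil m hm), ?_, ?_⟩
    · exact hq.append_of_support_inter (hp.dropUntil hm) fun x hx hx' =>
        hqp x hx (p.support_dropUntil_subset_support hm hx')
    · rw [hsplit, Walk.incidentEdges_append, Set.image_union]
      exact Set.ncard_lt_ncard h ((harc _).finite.union (harc _).finite)

lemma exists_isPath_image_incidentEdges_eq (hG : G.Connected)
    (hne : ∀ x, (G.incidenceSet x).Nonempty) :
    ∃ (a b : V) (p : G.Walk a b), p.IsPath ∧ φ '' p.incidentEdges = Set.Icc 1 t := by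
  set S := {n | ∃ (a b : V) (p : G.Walk a b), p.IsPath ∧ (φ '' p.incidentEdges).ncard = n}
  have hS : S.Nonempty := by
    obtain ⟨x⟩ := hG.nonempty
    exact ⟨_, x, x, .nil, .nil, rfl⟩
  have hbdd : BddAbove S := by
    refine ⟨t, ?_⟩
    rintro _ ⟨a, b, p, -, rfl⟩
    exact (Set.ncard_le_ncard (hφ.1.image_incidentEdges_subset p) (Set.finite_Icc 1 t)).trans
      (by simp)
  obtain ⟨a, b, p, hp, hmax⟩ := Nat.sSup_mem hS hbdd
  refine ⟨a, b, p, hp, by_contra fun hfull => ?_⟩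
  obtain ⟨a', b', p', hp', hlt⟩ := hφ.exists_ncard_lt hG hne hp hfull
  exact (le_csSup hbdd ⟨a', b', p', hp', rfl⟩).not_gt (hmax ▸ hlt)

lemma le_treeM [Fintype V] [DecidableRel G.Adj] (hG : G.IsTree) (hE : G.edgeSet.Nonempty) :
    t ≤ treeM G := by
  have hne := hG.connected.incidenceSet_nonempty hE
  obtain ⟨a, b, p, hp, hfull⟩ := hφ.exists_isPath_image_incidentEdges_eq hG.connected hne
  obtain ⟨a₁, b₁, p₁, hp₁, hpp₁, hlen₁⟩ : ∃ (a₁ b₁ : V) (p₁ : G.Walk a₁ b₁), p₁.IsPath ∧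
      p.support ⊆ p₁.support ∧ 1 ≤ p₁.length := by
    cases p with
    | nil =>
      obtain ⟨e, he⟩ := hne a
      obtain ⟨w, hw, -⟩ := exists_adj_of_mem_incidenceSet he
      exact ⟨a, w, .cons hw .nil, by simp [hw.ne], by simp, by simp⟩
    | cons h q => exact ⟨_, _, .cons h q, hp, List.Subset.refl _, by simp⟩
  obtain ⟨a', b', q, hq, hsub, hlen, ha', hb'⟩ := hG.isAcyclic.exists_isPath_extend hp₁
  have hcov : Set.Icc 1 t ⊆ φ '' pathTP G q := by
    rw [← hfull]
    exact Set.image_mono ((Walk.incidentEdges_mono (List.Subset.trans hpp₁ hsub)).trans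
      (incidentEdges_subset_pathTP hq (by omega) ha' hb'))
  calc t = (Set.Icc 1 t).ncard := by simp
    _ ≤ (φ '' pathTP G q).ncard := Set.ncard_le_ncard hcov (Set.toFinite _)
    _ ≤ (pathTP G q).ncard := Set.ncard_image_le (Set.toFinite _)
    _ ≤ treeM G := ncard_pathTP_le_treeM hq

end IsCyclicIntervalColoring

lemma IsIntervalColoring.isCyclicIntervalColoring_cycReduce [Fintype V] [DecidableRel G.Adj]
    {T : ℕ} {f : Sym2 V → ℕ} (hf : IsIntervalColoring G T f) (ht : 0 < t)
    (hΔ : G.maxDegree ≤ t) (htT : t ≤ T) : IsCyclicIntervalColoring G t (cycReduce t ∘ f) := by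
  have hcolors : ∀ x, (G.incidenceSet x).Nonempty →
      ∃ a b, f '' G.incidenceSet x = Set.Icc a b ∧ 1 ≤ a ∧ a ≤ b ∧ b - a < t := by
    intro x hx
    obtain ⟨a, b, hab⟩ := hf.2 x hx
    have hle : a ≤ b := Set.nonempty_Icc.1 (hab ▸ hx.image f)
    obtain ⟨e, he, hea⟩ : a ∈ f '' G.incidenceSet x := hab ▸ Set.left_mem_Icc.2 hle
    have hcard := hf.1.ncard_image_incidenceSet x
    rw [hab, Set.ncard_Icc_nat] at hcard
    have ha := hea ▸ hf.1.1 e he.1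
    have := G.degree_le_maxDegree x
    rw [Set.mem_Icc] at ha
    exact ⟨a, b, hab, by omega, hle, by omega⟩
  refine ⟨⟨fun e _ => cycReduce_mem_Icc ht _, ?_, fun c hc => ?_⟩, fun x hx => ?_⟩
  · rintro e₁ he₁ e₂ he₂ hne ⟨x, hx₁, hx₂⟩ h
    obtain ⟨a, b, hab, ha, -, hba⟩ := hcolors x ⟨e₁, he₁, hx₁⟩
    have h₁ : f e₁ ∈ Set.Icc a b := hab ▸ ⟨e₁, ⟨he₁, hx₁⟩, rfl⟩
    have h₂ : f e₂ ∈ Set.Icc a b := hab ▸ ⟨e₂, ⟨he₂, hx₂⟩, rfl⟩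
    exact hf.1.2.1 e₁ he₁ e₂ he₂ hne ⟨x, hx₁, hx₂⟩ (cycReduce_injOn ht ha hba h₁ h₂ h)
  · obtain ⟨e, he, rfl⟩ := hf.1.2.2 c ⟨hc.1, hc.2.trans htT⟩
    exact ⟨e, he, cycReduce_of_mem_Icc hc⟩
  · obtain ⟨a, b, hab, ha, hle, hba⟩ := hcolors x hx
    rw [Set.image_comp, hab, cycReduce_image_Icc ht ha hba hle]
    exact isCyclicInterval_cycArc_zero (cycReduce_mem_Icc ht a) hba

end Coloring

/-! ### Rooted trees and the interval colouring -/

namespace Rooted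

section Structure

variable {u : V} (pth : ∀ x, G.Walk u x)

def parent (x : V) : V := (pth x).penultimate

def depth (x : V) : ℕ := (pth x).length

def children [Fintype V] [DecidableRel G.Adj] (x : V) : Finset V :=
  {c ∈ G.neighborFinset x | depth pth c = depth pth x + 1}

variable {pth} (hG : G.IsAcyclic) (hpth : ∀ x, (pth x).IsPath)
include hG hpth

lemma eq_of_isPath {x : V} {q : G.Walk u x} (hq : q.IsPath) : q = pth x :=
  Subtype.mk.inj ((hG.subsingleton_path u x).elim ⟨q, hq⟩ ⟨pth x, hpth x⟩)

lemma pth_root : pth u = .nil := (eq_of_isPath hG hpth .nil).symm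

lemma depth_root : depth pth u = 0 := by
  rw [depth, pth_root hG hpth, Walk.length_nil]

lemma pth_eq_concat {x : V} (hx : x ≠ u) :
    ∃ h : G.Adj (parent pth x) x, pth x = (pth (parent pth x)).concat h := by
  have hnil : ¬(pth x).Nil := fun h => hx h.eq.symm
  have hd : (pth x).dropLast = pth (parent pth x) := eq_of_isPath hG hpth ((hpth x).take _)
  refine ⟨(pth x).adj_penultimate hnil, ?_⟩
  rw [← hd]
  exact (Walk.concat_dropLast _).symm

lemma parent_depth_of_adj {x y : V} (h : G.Adj x y) :
    (parent pth y = x ∧ depth pth y = depth pth x + 1) ∨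
      (parent pth x = y ∧ depth pth x = depth pth y + 1) := by
  by_cases hx : x ∈ (pth y).support
  · have hy := hG.path_concat (hpth x) (hpth y) h hx
    exact Or.inl ⟨by rw [parent, hy, Walk.penultimate_concat],
      by rw [depth, hy, Walk.length_concat]; rfl⟩
  · have hy := hG.path_concat (hpth y) (hpth x) h.symm
      (hG.mem_support_of_ne_mem_support_of_adj_of_isPath (hpth x) (hpth y) h hx)
    exact Or.inr ⟨by rw [parent, hy, Walk.penultimate_concat],
      by rw [depth, hy, Walk.length_concat]; rfl⟩

lemma depth_parent {x : V} (hx : x ≠ u) : depth pth x = depth pth (parent pth x) + 1 := by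
  obtain ⟨h, hx⟩ := pth_eq_concat hG hpth hx
  rw [depth, hx, Walk.length_concat]
  rfl

lemma ne_root_of_adj_of_depth_le {x y : V} (h : G.Adj x y) (hxy : depth pth x ≤ depth pth y) :
    y ≠ u := by
  rintro rfl
  rcases parent_depth_of_adj hG hpth h with h' | h' <;> rw [depth_root hG hpth] at h' hxy <;> omega

variable [Fintype V] [DecidableRel G.Adj]

omit hG hpth in
lemma mem_children {x c : V} :
    c ∈ children pth x ↔ G.Adj x c ∧ depth pth c = depth pth x + 1 := by
  simp [children]

lemma parent_of_mem_children {x c : V} (hc : c ∈ children pth x) : parent pth c = x := by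
  rw [mem_children] at hc
  rcases parent_depth_of_adj hG hpth hc.1 with h | h
  · exact h.1
  · omega

lemma degree_root : G.degree u = #(children pth u) := by
  rw [← card_neighborFinset_eq_degree]
  congr 1
  ext c
  rw [mem_children, mem_neighborFinset, iff_self_and]
  intro h
  rcases parent_depth_of_adj hG hpth h with h' | h' <;> rw [depth_root hG hpth] at h' ⊢ <;> omega

lemma degree_of_ne_root {x : V} (hx : x ≠ u) : G.degree x = #(children pth x) + 1 := by
  classical
  have hpar : parent pth x ∉ children pth x := by
    rw [mem_children]
    have := depth_parent hG hpth hx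
    omega
  rw [← card_neighborFinset_eq_degree, ← Finset.card_insert_of_notMem hpar]
  congr 1
  ext c
  rw [Finset.mem_insert, mem_children, mem_neighborFinset]
  constructor
  · intro h
    rcases parent_depth_of_adj hG hpth h with h' | h'
    · exact Or.inr ⟨h, h'.2⟩
    · exact Or.inl h'.1.symm
  · rintro (rfl | h)
    · exact (pth_eq_concat hG hpth hx).1.symm
    · exact h.1

end Structure

section Labels

open Finset

variable {u : V} (pth : ∀ x, G.Walk u x) (key : V → ℕ) [Fintype V] [DecidableRel G.Adj]

def label (x : V) : ℕ :=
  ((pth x).support.tail.map fun z => (children pth (parent pth z)).rankBy key z + 1).sum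

/-- Labels increase away from `u`, so an edge gets the label of its endpoint farther from `u`. -/
def edgeLabel : Sym2 V → ℕ :=
  Sym2.lift ⟨fun a b => max (label pth key a) (label pth key b), fun _ _ => max_comm _ _⟩

lemma edgeLabel_mk (a b : V) :
    edgeLabel pth key s(a, b) = max (label pth key a) (label pth key b) := rfl

variable {pth key} (hG : G.IsAcyclic) (hpth : ∀ x, (pth x).IsPath)
include hG hpth

lemma mem_children_parent {x : V} (hx : x ≠ u) : x ∈ children pth (parent pth x) :=
  mem_children.2 ⟨(pth_eq_concat hG hpth hx).1, depth_parent hG hpth hx⟩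

lemma ne_root_of_mem_children {x c : V} (hc : c ∈ children pth x) : c ≠ u :=
  ne_root_of_adj_of_depth_le hG hpth (mem_children.1 hc).1 (by rw [(mem_children.1 hc).2]; omega)

lemma label_root : label pth key u = 0 := by
  rw [label, pth_root hG hpth]
  rfl

lemma label_of_ne_root {x : V} (hx : x ≠ u) :
    label pth key x =
      label pth key (parent pth x) + (children pth (parent pth x)).rankBy key x + 1 := by
  obtain ⟨h, hpx⟩ := pth_eq_concat hG hpth hx
  rw [label, label, hpx, Walk.support_concat,
    List.tail_append_of_ne_nil (Walk.support_ne_nil _), List.map_append, List.sum_append,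
    List.map_singleton, List.sum_singleton]
  omega

lemma label_pos {x : V} (hx : x ≠ u) : 0 < label pth key x := by
  rw [label_of_ne_root hG hpth hx]
  omega

lemma label_of_mem_children {x c : V} (hc : c ∈ children pth x) :
    label pth key c = label pth key x + (children pth x).rankBy key c + 1 := by
  rw [label_of_ne_root hG hpth (ne_root_of_mem_children hG hpth hc),
    parent_of_mem_children hG hpth hc]

lemma edgeLabel_parent {x : V} (hx : x ≠ u) :
    edgeLabel pth key s(x, parent pth x) = label pth key x := by
  rw [edgeLabel_mk, label_of_ne_root hG hpth hx]
  omega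

lemma edgeLabel_of_adj {x y : V} (h : G.Adj x y) :
    (x ≠ u ∧ parent pth x = y ∧ edgeLabel pth key s(x, y) = label pth key x) ∨
      (y ∈ children pth x ∧
        edgeLabel pth key s(x, y) = label pth key x + (children pth x).rankBy key y + 1) := by
  rcases parent_depth_of_adj hG hpth h with h' | h'
  · have hy : y ∈ children pth x := mem_children.2 ⟨h, h'.2⟩
    refine Or.inr ⟨hy, ?_⟩
    rw [edgeLabel_mk, label_of_mem_children hG hpth hy]
    omega
  · have hx : x ≠ u := ne_root_of_adj_of_depth_le hG hpth h.symm (by omega)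
    exact Or.inl ⟨hx, h'.1, h'.1 ▸ edgeLabel_parent hG hpth hx⟩

lemma exists_mem_children_label_eq (hkey : Function.Injective key) {x : V} {m : ℕ}
    (h₁ : label pth key x < m) (h₂ : m ≤ label pth key x + #(children pth x)) :
    ∃ c ∈ children pth x, label pth key c = m := by
  have : m - label pth key x - 1 ∈ (children pth x).image ((children pth x).rankBy key) := by
    rw [image_rankBy hkey.injOn, mem_range]
    omega
  obtain ⟨c, hc, hrank⟩ := mem_image.1 this
  exact ⟨c, hc, by rw [label_of_mem_children hG hpth hc, hrank]; omega⟩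

lemma exists_label_eq (hkey : Function.Injective key) (x : V) {m : ℕ} (hm : 1 ≤ m)
    (hmx : m ≤ label pth key x + #(children pth x)) : ∃ y, y ≠ u ∧ label pth key y = m := by
  induction hd : depth pth x using Nat.strong_induction_on generalizing x with
  | _ n ih =>
  by_cases hlt : label pth key x < m
  · obtain ⟨c, hc, hcm⟩ := exists_mem_children_label_eq hG hpth hkey hlt hmx
    exact ⟨c, ne_root_of_mem_children hG hpth hc, hcm⟩
  have hx : x ≠ u := by
    rintro rfl
    rw [label_root hG hpth] at hlt
    omega
  have hlabel := label_of_ne_root (key := key) hG hpth hx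
  have hrank := rankBy_lt_card (key := key) (mem_children_parent hG hpth hx)
  exact ih _ (by rw [← hd, depth_parent hG hpth hx]; omega) (parent pth x) (by omega) rfl

lemma label_add_card_children_le (hkey : Function.Injective key) (x : V) :
    label pth key x + #(children pth x) ≤ univ.sup (label pth key) := by
  obtain h | h := Nat.eq_zero_or_pos (label pth key x + #(children pth x))
  · omega
  obtain ⟨y, -, hy⟩ := exists_label_eq hG hpth hkey x h le_rfl
  exact hy ▸ le_sup (mem_univ y)

lemma mem_image_edgeLabel_incidenceSet (hkey : Function.Injective key) {x : V} {m : ℕ} :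
    m ∈ edgeLabel pth key '' G.incidenceSet x ↔
      (x ≠ u ∧ m = label pth key x) ∨
        (label pth key x < m ∧ m ≤ label pth key x + #(children pth x)) := by
  constructor
  · rintro ⟨e, he, rfl⟩
    obtain ⟨y, hxy, rfl⟩ := exists_adj_of_mem_incidenceSet he
    rcases edgeLabel_of_adj hG hpth hxy with ⟨hx, -, h⟩ | ⟨hy, h⟩
    · exact Or.inl ⟨hx, h⟩
    · have := rankBy_lt_card (key := key) hy
      exact Or.inr ⟨by omega, by omega⟩
  · rintro (⟨hx, rfl⟩ | ⟨h₁, h₂⟩)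
    · exact ⟨_, ⟨(pth_eq_concat hG hpth hx).1.symm, Sym2.mem_mk_left _ _⟩,
        edgeLabel_parent hG hpth hx⟩
    · obtain ⟨c, hc, rfl⟩ := exists_mem_children_label_eq hG hpth hkey h₁ h₂
      refine ⟨_, ⟨(mem_children.1 hc).1, Sym2.mem_mk_left _ _⟩, ?_⟩
      rw [edgeLabel_mk, label_of_mem_children hG hpth hc]
      omega

lemma injOn_edgeLabel_incidenceSet (hkey : Function.Injective key) (x : V) :
    Set.InjOn (edgeLabel pth key) (G.incidenceSet x) := by
  intro e₁ he₁ e₂ he₂ h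
  obtain ⟨y₁, h₁, rfl⟩ := exists_adj_of_mem_incidenceSet he₁
  obtain ⟨y₂, h₂, rfl⟩ := exists_adj_of_mem_incidenceSet he₂
  rcases edgeLabel_of_adj (key := key) hG hpth h₁ with ⟨-, hy₁, hl₁⟩ | ⟨hy₁, hl₁⟩ <;>
    rcases edgeLabel_of_adj (key := key) hG hpth h₂ with ⟨-, hy₂, hl₂⟩ | ⟨hy₂, hl₂⟩
  · rw [← hy₁, ← hy₂]
  · omega
  · omega
  · rw [rankBy_injOn hkey.injOn hy₁ hy₂ (by omega)]

theorem isIntervalColoring_edgeLabel (hkey : Function.Injective key) :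
    IsIntervalColoring G (univ.sup (label pth key)) (edgeLabel pth key) := by
  refine ⟨⟨fun e he => ?_, fun e₁ he₁ e₂ he₂ hne ⟨x, hx₁, hx₂⟩ h => hne ?_, fun m hm => ?_⟩,
    fun x _ => ?_⟩
  · induction e using Sym2.ind with
    | h a b =>
    have hab : a ≠ u ∨ b ≠ u := by
      by_contra! h
      exact (G.mem_edgeSet.1 he).ne (h.1.trans h.2.symm)
    rw [edgeLabel_mk]
    refine ⟨?_, max_le (le_sup (mem_univ a)) (le_sup (mem_univ b))⟩
    rcases hab with h | h
    · exact (label_pos hG hpth h).trans_le (le_max_left _ _)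
    · exact (label_pos hG hpth h).trans_le (le_max_right _ _)
  · exact injOn_edgeLabel_incidenceSet hG hpth hkey x ⟨he₁, hx₁⟩ ⟨he₂, hx₂⟩ h
  · obtain ⟨x, -, hx⟩ := exists_mem_eq_sup univ ⟨u, mem_univ u⟩ (label pth key)
    obtain ⟨y, hy, rfl⟩ := exists_label_eq hG hpth hkey x hm.1 (by have := hx ▸ hm.2; omega)
    exact ⟨_, G.mem_edgeSet.2 (pth_eq_concat hG hpth hy).1.symm, edgeLabel_parent hG hpth hy⟩
  · by_cases hx : x = u
    · subst hx
      refine ⟨1, #(children pth x), Set.ext fun m => ?_⟩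
      rw [mem_image_edgeLabel_incidenceSet hG hpth hkey, label_root hG hpth, Set.mem_Icc]
      simp only [ne_eq, not_true_eq_false, false_and, false_or]
      omega
    · refine ⟨label pth key x, label pth key x + #(children pth x), Set.ext fun m => ?_⟩
      rw [mem_image_edgeLabel_incidenceSet hG hpth hkey, Set.mem_Icc]
      simp only [ne_eq, hx, not_false_eq_true, true_and]
      omega

end Labels

section Path

open Finset

variable [Fintype V] [DecidableEq V] {u v : V}

/-- Ranking children by this key puts the child lying on `p` last. -/
noncomputable def pathKey (p : G.Walk u v) (c : V) : ℕ :=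
  (if c ∈ p.support then Fintype.card V else 0) + Fintype.equivFin V c

lemma pathKey_injective (p : G.Walk u v) : Function.Injective (pathKey p) := by
  intro c d h
  have hc := (Fintype.equivFin V c).isLt
  have hd := (Fintype.equivFin V d).isLt
  refine (Fintype.equivFin V).injective (Fin.ext ?_)
  unfold pathKey at h
  split_ifs at h <;> omega

variable [DecidableRel G.Adj] {pth : ∀ x, G.Walk u x} (hG : G.IsAcyclic)
  (hpth : ∀ x, (pth x).IsPath) {p : G.Walk u v} (hp : p.IsPath)
include hG hpth hp

omit [Fintype V] [DecidableEq V] [DecidableRel G.Adj] in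
lemma depth_getVert {i : ℕ} (hi : i ≤ p.length) : depth pth (p.getVert i) = i := by
  rw [depth, ← eq_of_isPath hG hpth (hp.take i), Walk.take_length]
  omega

omit [DecidableEq V] in
lemma getVert_succ_mem_children {i : ℕ} (hi : i < p.length) :
    p.getVert (i + 1) ∈ children pth (p.getVert i) :=
  mem_children.2 ⟨p.adj_getVert_succ hi,
    by rw [depth_getVert hG hpth hp hi, depth_getVert hG hpth hp hi.le]⟩

lemma rankBy_getVert_succ {i : ℕ} (hi : i < p.length) :
    (children pth (p.getVert i)).rankBy (pathKey p) (p.getVert (i + 1)) =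
      #(children pth (p.getVert i)) - 1 := by
  refine rankBy_eq_card_sub_one (getVert_succ_mem_children hG hpth hp hi) fun d hd hne => ?_
  have hdp : d ∉ p.support := by
    intro hdp
    obtain ⟨j, rfl, hj⟩ := Walk.mem_support_iff_exists_getVert.1 hdp
    have := (mem_children.1 hd).2
    rw [depth_getVert hG hpth hp hj, depth_getVert hG hpth hp hi.le] at this
    exact hne (this ▸ rfl)
  have := (Fintype.equivFin V d).isLt
  simp only [pathKey, hdp, p.getVert_mem_support, if_true, if_false]
  omega

lemma label_getVert_succ {i : ℕ} (hi : i < p.length) :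
    label pth (pathKey p) (p.getVert (i + 1)) =
      label pth (pathKey p) (p.getVert i) + #(children pth (p.getVert i)) := by
  have hc := getVert_succ_mem_children hG hpth hp hi
  have := card_pos.2 ⟨_, hc⟩
  rw [label_of_mem_children hG hpth hc, rankBy_getVert_succ hG hpth hp hi]
  omega

lemma label_add_card_children_getVert {i : ℕ} (hi : i ≤ p.length) :
    label pth (pathKey p) (p.getVert i) + #(children pth (p.getVert i)) + i =
      ∑ j ∈ range (i + 1), G.degree (p.getVert j) := by
  induction i with
  | zero =>
    rw [zero_add, sum_range_one, p.getVert_zero, label_root hG hpth, degree_root hG hpth]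
    omega
  | succ i ih =>
    have hne : p.getVert (i + 1) ≠ u := by
      intro h
      have := depth_getVert hG hpth hp hi
      rw [h, depth_root hG hpth] at this
      omega
    rw [sum_range_succ, ← ih (by omega), label_getVert_succ hG hpth hp (by omega),
      degree_of_ne_root hG hpth hne]
    omega

end Path

end Rooted

theorem IsTree.exists_isIntervalColoring [Fintype V] [DecidableEq V] [DecidableRel G.Adj]
    (hG : G.IsTree) {u v : V} {p : G.Walk u v} (hp : p.IsPath) :
    ∃ T f, IsIntervalColoring G T f ∧ p.incidentEdges.ncard ≤ T := by
  choose pth hpth using fun x => (hG.existsUnique_path u x).exists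
  have hkey := Rooted.pathKey_injective p
  refine ⟨_, _, Rooted.isIntervalColoring_edgeLabel hG.isAcyclic hpth hkey, ?_⟩
  have := p.ncard_incidentEdges_add_length_le
  rw [← Rooted.label_add_card_children_getVert hG.isAcyclic hpth hp le_rfl] at this
  have := Rooted.label_add_card_children_le hG.isAcyclic hpth hkey (p.getVert p.length)
  omega

lemma IsTree.exists_isCyclicIntervalColoring [Fintype V] [DecidableEq V] [DecidableRel G.Adj]
    (hG : G.IsTree) (hE : G.edgeSet.Nonempty) {t : ℕ} (hΔ : G.maxDegree ≤ t)
    (hM : t ≤ treeM G) : ∃ φ, IsCyclicIntervalColoring G t φ := by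
  have := hG.connected.nonempty
  obtain ⟨u, v, p, hp, hpM⟩ := exists_isPath_ncard_pathTP_eq_treeM (G := G)
  obtain ⟨T, f, hf, hT⟩ := hG.exists_isIntervalColoring hp
  have ht : 0 < t := by
    obtain ⟨x⟩ := ‹Nonempty V›
    obtain ⟨e, he⟩ := hG.connected.incidenceSet_nonempty hE x
    obtain ⟨y, hxy, -⟩ := exists_adj_of_mem_incidenceSet he
    have := (G.degree_pos_iff_exists_adj x).2 ⟨y, hxy⟩
    have := G.degree_le_maxDegree x
    omega
  refine ⟨_, hf.isCyclicIntervalColoring_cycReduce ht hΔ (hM.trans ?_)⟩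
  rw [← hpM]
  exact (Set.ncard_le_ncard (pathTP_subset_incidentEdges p) (Set.toFinite _)).trans hT

end SimpleGraph

/-- For any tree `H`, `Θ(H) = [Δ(H), M(H)]`. -/
theorem stmt7 {V : Type*} [Fintype V] [DecidableEq V] (H : SimpleGraph V) [DecidableRel H.Adj]
    (hH : H.IsTree) (hE : H.edgeSet.Nonempty) :
    {t : ℕ | ∃ φ, IsCyclicIntervalColoring H t φ} = Set.Icc H.maxDegree (treeM H) := by
  ext t
  constructor
  · rintro ⟨φ, hφ⟩
    exact ⟨hφ.1.maxDegree_le, hφ.le_treeM hH hE⟩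
  · rintro ⟨hΔ, hM⟩
    exact hH.exists_isCyclicIntervalColoring hE hΔ hM
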